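/- Let n ≥ 1 and let m be an odd integer with 1 ≤ m ≤ n. Let k be the largest integer with 2k·m ≤ 2n, and suppose 2n + 1 − m ≤ 2k·m < 2n; set v = 2n − 2k·m. Then (m^{2k}, v) is a symplectic partition of 2n, and every symplectic partition of 2n all of whose parts are at most m is dominated by (m^{2k}, v) in the dominance order. -/

import Mathlib

/-- `p` is a partition of `n`: a weakly decreasing list of positive integers summing to `n`. -/
def IsPartitionOf (p : List ℕ) (n : ℕ) : Prop :=
  p.Pairwise (· ≥ ·) ∧ (∀ x ∈ p, 0 < x) ∧ p.sum = n

/-- `Dominates q p` means `p ⊴ q` in the dominance order. -/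
def Dominates (q p : List ℕ) : Prop :=
  ∀ k : ℕ, (p.take k).sum ≤ (q.take k).sum

/-- A partition is symplectic if every odd part occurs an even number of times. -/
def Symplectic (p : List ℕ) : Prop :=
  ∀ x : ℕ, Odd x → Even (p.count x)

/-! The first `j` parts of a partition with parts at most `m` sum to at most `j * m`, which is
exactly the sum of the first `j` parts of `(m^a, v)` as long as `j ≤ a`; beyond that, the
partial sums of `(m^a, v)` have reached the full size. Evenness of `v` and of the multiplicity
`2k` of `m` gives symplecticity. -/

namespace List

theorem sum_take_le_mul_of_forall_le {q : List ℕ} {m : ℕ} (hle : ∀ x ∈ q, x ≤ m) (j : ℕ) :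
    (q.take j).sum ≤ j * m :=
  calc (q.take j).sum ≤ (q.take j).length * m := by
        simpa only [smul_eq_mul] using
          sum_le_card_nsmul (q.take j) m fun x hx => hle x (mem_of_mem_take hx)
    _ ≤ j * m := Nat.mul_le_mul_right m (length_take_le j q)

theorem sum_take_replicate_append_singleton {a j : ℕ} (m v : ℕ) (hj : j ≤ a) :
    ((replicate a m ++ [v]).take j).sum = j * m := by
  rw [take_append_of_le_length (by simpa using hj), take_replicate, min_eq_left hj,
    sum_replicate, smul_eq_mul]

end List

open List

theorem isPartitionOf_replicate_append_singleton (a : ℕ) {m v : ℕ} (hv0 : 0 < v) (hvm : v ≤ m) :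
    IsPartitionOf (replicate a m ++ [v]) (a * m + v) := by
  refine ⟨pairwise_append.mpr ⟨pairwise_replicate.mpr (by simp), by simp, ?_⟩, ?_, ?_⟩
  · intro x hx y hy
    rw [eq_of_mem_replicate hx, mem_singleton.mp hy]
    exact hvm
  · intro x hx
    rcases mem_append.mp hx with hx | hx
    · rw [eq_of_mem_replicate hx]; omega
    · rw [mem_singleton.mp hx]; exact hv0
  · simp [sum_replicate]

theorem symplectic_replicate_append_singleton {a : ℕ} (m : ℕ) {v : ℕ} (ha : Even a)
    (hv : Even v) : Symplectic (replicate a m ++ [v]) := by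
  intro x hx
  have hxv : x ≠ v := by
    rintro rfl
    exact Nat.not_odd_iff_even.mpr hv hx
  rw [count_append, count_replicate, count_eq_zero_of_not_mem (by simpa using hxv), add_zero]
  split_ifs
  · exact ha
  · exact .zero

theorem dominates_replicate_append_singleton (a : ℕ) {m v : ℕ} {q : List ℕ}
    (hle : ∀ x ∈ q, x ≤ m) (hsum : q.sum ≤ a * m + v) :
    Dominates (replicate a m ++ [v]) q := by
  intro j
  by_cases hj : j ≤ a
  · rw [sum_take_replicate_append_singleton m v hj]
    exact sum_take_le_mul_of_forall_le hle j
  · have hlen : (replicate a m ++ [v]).length ≤ j := by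
      simp only [length_append, length_replicate, length_singleton]; omega
    rw [take_of_length_le hlen]
    calc (q.take j).sum ≤ q.sum := (take_sublist j q).sum_le_sum fun x _ => Nat.zero_le x
      _ ≤ a * m + v := hsum
      _ = (replicate a m ++ [v]).sum := by simp [sum_replicate]

theorem stmt6_general (n m k v : ℕ)
    (hlo : 2 * n + 1 - m ≤ 2 * k * m) (hhi : 2 * k * m < 2 * n)
    (hv : v = 2 * n - 2 * k * m) :
    IsPartitionOf (List.replicate (2 * k) m ++ [v]) (2 * n) ∧
    Symplectic (List.replicate (2 * k) m ++ [v]) ∧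
    ∀ q : List ℕ, IsPartitionOf q (2 * n) → Symplectic q → (∀ x ∈ q, x ≤ m) →
      Dominates (List.replicate (2 * k) m ++ [v]) q := by
  have hsize : 2 * n = 2 * k * m + v := by omega
  have hv_even : Even v := ⟨n - k * m, by rw [hv, mul_assoc]; omega⟩
  refine ⟨hsize ▸ isPartitionOf_replicate_append_singleton (2 * k) (by omega) (by omega),
    symplectic_replicate_append_singleton m (even_two_mul k) hv_even, ?_⟩
  intro q hq _ hle
  exact dominates_replicate_append_singleton (2 * k) hle (hq.2.2.trans hsize).le

/-- For odd `m` with `1 ≤ m ≤ n`, `k` maximal with `2*k*m ≤ 2n`, assuming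
`2n + 1 - m ≤ 2km < 2n` and `v = 2n - 2km`, the list `(m^{2k}, v)` is a symplectic partition
of `2n` dominating every symplectic partition of `2n` all of whose parts are at most `m`. -/
theorem stmt6 (n m k v : ℕ) (hn : 1 ≤ n) (hodd : Odd m) (hm1 : 1 ≤ m) (hmn : m ≤ n)
    (hk : 2 * k * m ≤ 2 * n) (hkmax : 2 * n < 2 * (k + 1) * m)
    (hlo : 2 * n + 1 - m ≤ 2 * k * m) (hhi : 2 * k * m < 2 * n)
    (hv : v = 2 * n - 2 * k * m) :
    IsPartitionOf (List.replicate (2 * k) m ++ [v]) (2 * n) ∧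
    Symplectic (List.replicate (2 * k) m ++ [v]) ∧
    ∀ q : List ℕ, IsPartitionOf q (2 * n) → Symplectic q → (∀ x ∈ q, x ≤ m) →
      Dominates (List.replicate (2 * k) m ++ [v]) q :=
  stmt6_general n m k v hlo hhi hv
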